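/- Let y_t = Σ_{s=0}^{t−1} C A^s B u_{t−s} be the output of a linear dynamical system, and let p(x) = x^n + Σ_{j=0}^{n−1} c_{n−j} x^j be any monic polynomial of degree n (with c_0 := 1). Then for t > n: y_t = − Σ_{i=1}^n c_i y_{t−i} + Σ_{s=0}^{n−1} (Σ_{i=0}^s c_i C A^{s−i} B) u_{t−s} + Σ_{s=0}^{t−n−1} C p(A) A^s B u_{t−n−s}. -/
import Mathlib

open Matrix

private lemma sum_mulVec_aux {d : ℕ} (s : Finset ℕ) (f : ℕ → Matrix (Fin d) (Fin d) ℝ)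
    (B : Fin d → ℝ) : (∑ j ∈ s, f j).mulVec B = ∑ j ∈ s, (f j).mulVec B := by
  induction s using Finset.cons_induction with
  | empty => simp
  | cons a s h ih => rw [Finset.sum_cons, Finset.sum_cons, Matrix.add_mulVec, ih]

private lemma dot_sum_aux {d : ℕ} (s : Finset ℕ) (f : ℕ → (Fin d → ℝ))
    (C : Fin d → ℝ) : C ⬝ᵥ (∑ j ∈ s, f j) = ∑ j ∈ s, C ⬝ᵥ f j := by
  induction s using Finset.cons_induction with
  | empty => simp
  | cons a s h ih => rw [Finset.sum_cons, Finset.sum_cons, dotProduct_add, ih]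

theorem usp_decomposition (d : ℕ) (A : Matrix (Fin d) (Fin d) ℝ)
    (B C : Fin d → ℝ) (u : ℕ → ℝ) (y : ℕ → ℝ)
    (hy : ∀ t : ℕ, y t = ∑ s ∈ Finset.range t, (C ⬝ᵥ (A ^ s).mulVec B) * u (t - s))
    (n : ℕ) (c : ℕ → ℝ) (hc0 : c 0 = 1)
    (pA : Matrix (Fin d) (Fin d) ℝ)
    (hpA : pA = A ^ n + ∑ j ∈ Finset.range n, c (n - j) • A ^ j) :
    ∀ t : ℕ, n < t →
      y t = -(∑ i ∈ Finset.Icc 1 n, c i * y (t - i)) +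
        (∑ s ∈ Finset.range n,
          (∑ i ∈ Finset.range (s + 1), c i * (C ⬝ᵥ (A ^ (s - i)).mulVec B)) * u (t - s)) +
        ∑ s ∈ Finset.range (t - n), (C ⬝ᵥ (pA * A ^ s).mulVec B) * u (t - n - s) := by
  intro t ht
  set g : ℕ → ℝ := fun s => C ⬝ᵥ (A ^ s).mulVec B with hg
  have reidx : ∀ k : ℕ, (∑ s ∈ Finset.range k, g s * u (k - s))
      = ∑ m ∈ Finset.Icc 1 k, g (k - m) * u m := by
    intro k
    refine Finset.sum_nbij' (fun s => k - s) (fun m => k - m) ?_ ?_ ?_ ?_ ?_ <;>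
      simp only [Finset.mem_range, Finset.mem_Icc] <;> intro a ha
    · omega
    · omega
    · omega
    · omega
    · have h1 : k - (k - a) = a := by omega
      rw [h1]
  have coefex : ∀ s : ℕ, C ⬝ᵥ (pA * A ^ s).mulVec B
      = g (n + s) + ∑ j ∈ Finset.range n, c (n - j) * g (j + s) := by
    intro s
    have h1 : pA * A ^ s = A ^ (n + s) + ∑ j ∈ Finset.range n, c (n - j) • A ^ (j + s) := by
      rw [hpA, Matrix.add_mul, Finset.sum_mul, ← pow_add]
      congr 1
      refine Finset.sum_congr rfl fun j _ => ?_
      rw [Matrix.smul_mul, ← pow_add]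
    rw [h1, Matrix.add_mulVec, sum_mulVec_aux, dotProduct_add, dot_sum_aux]
    simp [hg, Matrix.smul_mulVec]
  have hyt : ∀ i : ℕ, y (t - i) = ∑ m ∈ Finset.Icc 1 (t - i), g (t - i - m) * u m := by
    intro i; rw [hy, reidx]
  have split0 : ∑ i ∈ Finset.range (n + 1), c i * y (t - i)
      = y t + ∑ i ∈ Finset.Icc 1 n, c i * y (t - i) := by
    rw [Finset.sum_range_succ' (fun i => c i * y (t - i)) n]
    simp only [hc0, Nat.sub_zero, one_mul]
    rw [add_comm]
    congr 1
    refine Finset.sum_nbij' (fun i => i + 1) (fun i => i - 1) ?_ ?_ ?_ ?_ ?_ <;>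
      simp only [Finset.mem_range, Finset.mem_Icc] <;> intro a ha
    · omega
    · omega
    · omega
    · omega
    · trivial
  have F1 : ∀ i ∈ Finset.range (n + 1),
      c i * y (t - i) = (∑ m ∈ Finset.Icc 1 (t - n), c i * (g (t - i - m) * u m))
        + ∑ m ∈ Finset.Ioc (t - n) (t - i), c i * (g (t - i - m) * u m) := by
    intro i hi
    simp only [Finset.mem_range] at hi
    have hun : Finset.Icc 1 (t - n) ∪ Finset.Ioc (t - n) (t - i) = Finset.Icc 1 (t - i) := by
      ext a
      simp only [Finset.mem_union, Finset.mem_Icc, Finset.mem_Ioc]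
      omega
    have hdis : Disjoint (Finset.Icc 1 (t - n)) (Finset.Ioc (t - n) (t - i)) := by
      rw [Finset.disjoint_left]
      intro a ha hb
      simp only [Finset.mem_Icc] at ha
      simp only [Finset.mem_Ioc] at hb
      omega
    rw [hyt i, Finset.mul_sum, ← hun, Finset.sum_union hdis]
  have hTail : (∑ i ∈ Finset.range (n + 1), ∑ m ∈ Finset.Icc 1 (t - n),
        c i * (g (t - i - m) * u m))
      = ∑ s ∈ Finset.range (t - n), (C ⬝ᵥ (pA * A ^ s).mulVec B) * u (t - n - s) := by
    rw [Finset.sum_comm]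
    refine (Finset.sum_nbij' (fun s => t - n - s) (fun m => t - n - m) ?_ ?_ ?_ ?_ ?_).symm <;>
      simp only [Finset.mem_range, Finset.mem_Icc] <;> intro a ha
    · omega
    · omega
    · omega
    · omega
    · rw [coefex a]
      rw [Finset.sum_range_succ' (fun i => c i * (g (t - i - (t - n - a)) * u (t - n - a))) n]
      simp only [hc0, Nat.sub_zero, one_mul]
      have h3 : t - (t - n - a) = n + a := by omega
      rw [h3, add_mul, add_comm]
      congr 1
      rw [Finset.sum_mul]
      refine Finset.sum_nbij' (fun j => n - 1 - j) (fun i => n - 1 - i) ?_ ?_ ?_ ?_ ?_ <;>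
        simp only [Finset.mem_range] <;> intro b hb
      · omega
      · omega
      · omega
      · omega
      · have h4 : n - 1 - b + 1 = n - b := by omega
        have h5 : t - (n - b) - (t - n - a) = b + a := by omega
        rw [h4, h5]
        ring
  have hswap : ∀ (i m : ℕ), i ∈ Finset.range (n + 1) ∧ m ∈ Finset.Ioc (t - n) (t - i)
      ↔ i ∈ Finset.range (t - m + 1) ∧ m ∈ Finset.Ioc (t - n) t := by
    intro i m
    simp only [Finset.mem_range, Finset.mem_Ioc]
    omega
  have hMid : (∑ i ∈ Finset.range (n + 1), ∑ m ∈ Finset.Ioc (t - n) (t - i),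
        c i * (g (t - i - m) * u m))
      = ∑ s ∈ Finset.range n, (∑ i ∈ Finset.range (s + 1), c i * g (s - i)) * u (t - s) := by
    rw [Finset.sum_comm' hswap]
    refine (Finset.sum_nbij' (fun s => t - s) (fun m => t - m) ?_ ?_ ?_ ?_ ?_).symm <;>
      simp only [Finset.mem_range, Finset.mem_Ioc] <;> intro a ha
    · omega
    · omega
    · omega
    · omega
    · have h6 : t - (t - a) = a := by omega
      rw [h6, Finset.sum_mul]
      refine Finset.sum_congr rfl fun i hi => ?_
      have h7 : t - i - (t - a) = a - i := by
        simp only [Finset.mem_range] at hi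
        omega
      rw [h7]
      ring
  have key : ∑ i ∈ Finset.range (n + 1), c i * y (t - i)
      = (∑ s ∈ Finset.range n, (∑ i ∈ Finset.range (s + 1), c i * g (s - i)) * u (t - s)) +
        ∑ s ∈ Finset.range (t - n), (C ⬝ᵥ (pA * A ^ s).mulVec B) * u (t - n - s) := by
    rw [Finset.sum_congr rfl F1, Finset.sum_add_distrib, hTail, hMid]
    ring
  linarith [key, split0]
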